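/- arXiv:1704.04473 — 2 statements merged into one kernel-verified Lean document; each statement's English description precedes it below -/
import Mathlib

section
/- Let u_1,…,u_ℓ be a t-clustering of a finite simple unweighted undirected graph G, and let H be a spanning subgraph of G that contains every edge of G_ℓ and satisfies, for every i ∈ {1,…,ℓ} and every vertex x reachable from u_i in G_{i-1}, d_H(u_i,x) ≤ d_{G_{i-1}}(u_i,x). Then H is an additive 2-spanner of G, i.e., d_H(u,v) ≤ d_G(u,v) + 2 for every pair of vertices u, v connected in G. -/
/-!
A shortest `a`–`b` path either keeps all its edges in `G_ℓ ⊆ H`, or there is a first stage `i`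
at which one of its edges is deleted. That edge lies in `G_{i-1}` but not in `G_i`, so one of its
endpoints is in the cluster of `u_i`; hence the whole path lives in `G_{i-1}` and passes within
distance `1` of `u_i` there. Going from `a` to `u_i` and on to `b` in `H` then costs at most
`d_{G_{i-1}}(u_i, a) + d_{G_{i-1}}(u_i, b) ≤ d_G(a, b) + 2`.
-/

open SimpleGraph

/-- The closed neighborhood of a vertex as a `Finset`. -/
def closedNbhd {V : Type*} [Fintype V] [DecidableEq V] (G : SimpleGraph V)
    [DecidableRel G.Adj] (v : V) : Finset V :=
  insert v (G.neighborFinset v)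

/-- `clustered G u i` is the union `C_1 ∪ … ∪ C_i` of the first `i` clusters of the
sequence `u` (0-indexed: the clusters of `u 0, …, u (i-1)`).  It equals the union of the
closed neighborhoods of `u 0, …, u (i-1)`. -/
def clustered {V : Type*} [Fintype V] [DecidableEq V] (G : SimpleGraph V)
    [DecidableRel G.Adj] (u : ℕ → V) : ℕ → Finset V
  | 0 => ∅
  | i + 1 => clustered G u i ∪ closedNbhd G (u i)

/-- The `i`-th cluster `C_i = (Γ_G(u_i) ∪ {u_i}) \ (C_1 ∪ … ∪ C_{i-1})` (0-indexed). -/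
def cluster {V : Type*} [Fintype V] [DecidableEq V] (G : SimpleGraph V)
    [DecidableRel G.Adj] (u : ℕ → V) (i : ℕ) : Finset V :=
  closedNbhd G (u i) \ clustered G u i

/-- The graph `G_i`: the subgraph of `G` containing exactly those edges of `G`
whose endpoints do not both lie in `C_1 ∪ … ∪ C_i`. -/
def level {V : Type*} [Fintype V] [DecidableEq V] (G : SimpleGraph V)
    [DecidableRel G.Adj] (u : ℕ → V) (i : ℕ) : SimpleGraph V where
  Adj a b := G.Adj a b ∧ ¬(a ∈ clustered G u i ∧ b ∈ clustered G u i)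
  symm := ⟨fun a b h => ⟨h.1.symm, fun hc => h.2 ⟨hc.2, hc.1⟩⟩⟩
  loopless := ⟨fun a h => G.irrefl h.1⟩

/-- `u 0, …, u (ℓ-1)` is a `t`-clustering of `G`:
(i) each `u i` maximizes `|(Γ_G(v) ∪ {v}) \ (C_1 ∪ … ∪ C_{i-1})|` over all vertices `v`,
(ii) every cluster `C_i` has at least `t` vertices, and
(iii) for every vertex `v`, `|(Γ_G(v) ∪ {v}) \ (C_1 ∪ … ∪ C_ℓ)| < t`. -/
def IsClustering {V : Type*} [Fintype V] [DecidableEq V] (G : SimpleGraph V)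
    [DecidableRel G.Adj] (t ℓ : ℕ) (u : ℕ → V) : Prop :=
  (∀ i < ℓ, ∀ v : V,
      (closedNbhd G v \ clustered G u i).card ≤ (cluster G u i).card) ∧
  (∀ i < ℓ, t ≤ (cluster G u i).card) ∧
  (∀ v : V, (closedNbhd G v \ clustered G u ℓ).card < t)

namespace SimpleGraph

variable {V : Type*} [DecidableEq V] {G : SimpleGraph V}

theorem Walk.edist_add_edist_le_length {a b z : V} (W : G.Walk a b) (hz : z ∈ W.support) :
    G.edist a z + G.edist z b ≤ W.length := by
  have hsplit := congrArg Walk.length (W.take_spec hz)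
  rw [Walk.length_append] at hsplit
  rw [← hsplit, Nat.cast_add]
  exact add_le_add (edist_le _) (edist_le _)

theorem edist_le_length_add_two_of_mem_support {H : SimpleGraph V} {c z a b : V}
    (hH : ∀ x, G.Reachable c x → H.edist c x ≤ G.edist c x) (hcz : G.edist c z ≤ 1)
    (W : G.Walk a b) (hz : z ∈ W.support) : H.edist a b ≤ W.length + 2 := by
  have hcz' : G.Reachable c z :=
    reachable_of_edist_ne_top (ne_top_of_le_ne_top ENat.one_ne_top hcz)
  have hca : G.Reachable c a := hcz'.trans (W.takeUntil z hz).reachable.symm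
  have hcb : G.Reachable c b := hcz'.trans (W.dropUntil z hz).reachable
  calc H.edist a b ≤ H.edist a c + H.edist c b := SimpleGraph.edist_triangle
    _ = H.edist c a + H.edist c b := by rw [edist_comm (u := a)]
    _ ≤ G.edist c a + G.edist c b := add_le_add (hH a hca) (hH b hcb)
    _ ≤ (G.edist c z + G.edist z a) + (G.edist c z + G.edist z b) :=
        add_le_add SimpleGraph.edist_triangle SimpleGraph.edist_triangle
    _ ≤ (1 + G.edist a z) + (1 + G.edist z b) := by rw [edist_comm (u := z)]; gcongr
    _ = (G.edist a z + G.edist z b) + 2 := by ring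
    _ ≤ W.length + 2 := by gcongr; exact W.edist_add_edist_le_length hz

end SimpleGraph

section Clustering

variable {V : Type*} [Fintype V] [DecidableEq V] (G : SimpleGraph V) [DecidableRel G.Adj]
  (u : ℕ → V)

theorem level_zero : level G u 0 = G := by
  ext a b
  simp [level, clustered]

variable {G u}

theorem edist_level_le_one_of_mem_cluster {i : ℕ} {z : V} (hz : z ∈ cluster G u i) :
    (level G u i).edist (u i) z ≤ 1 := by
  obtain ⟨hzN, hzC⟩ := Finset.mem_sdiff.mp hz
  rcases Finset.mem_insert.mp hzN with rfl | hadj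
  · simp
  · have : (level G u i).Adj (u i) z :=
      ⟨(G.mem_neighborFinset _ _).mp hadj, fun hc => hzC hc.2⟩
    exact (edist_eq_one_iff_adj.mpr this).le

theorem mem_cluster_of_adj_level_of_not_adj_level_succ {i : ℕ} {x y : V}
    (hi : (level G u i).Adj x y) (hsucc : ¬(level G u (i + 1)).Adj x y) :
    x ∈ cluster G u i ∨ y ∈ cluster G u i := by
  have hxy : x ∈ clustered G u (i + 1) ∧ y ∈ clustered G u (i + 1) :=
    not_not.mp fun hc => hsucc ⟨hi.1, hc⟩
  simp only [clustered, Finset.mem_union] at hxy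
  simp only [cluster, Finset.mem_sdiff]
  by_cases hx : x ∈ clustered G u i
  · exact .inr ⟨hxy.2.resolve_left fun hy => hi.2 ⟨hx, hy⟩, fun hy => hi.2 ⟨hx, hy⟩⟩
  · exact .inl ⟨hxy.1.resolve_left hx, hx⟩

theorem SimpleGraph.Walk.edges_subset_level_or_exists_mem_cluster {a b : V} (W : G.Walk a b)
    (n : ℕ) :
    (∀ e ∈ W.edges, e ∈ (level G u n).edgeSet) ∨
      ∃ i < n, (∀ e ∈ W.edges, e ∈ (level G u i).edgeSet) ∧
        ∃ z ∈ W.support, z ∈ cluster G u i := by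
  induction n with
  | zero =>
    left
    rw [level_zero]
    exact fun e he => W.edges_subset_edgeSet he
  | succ n ih =>
    rcases ih with hall | ⟨i, hi, hedges, hz⟩
    · by_cases hall' : ∀ e ∈ W.edges, e ∈ (level G u (n + 1)).edgeSet
      · exact .inl hall'
      obtain ⟨e, heW, he⟩ := not_forall₂.mp hall'
      refine .inr ⟨n, n.lt_succ_self, hall, ?_⟩
      induction e with
      | h x y =>
        rcases mem_cluster_of_adj_level_of_not_adj_level_succ (hall _ heW) he with hx | hy
        · exact ⟨x, W.fst_mem_support_of_mem_edges heW, hx⟩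
        · exact ⟨y, W.snd_mem_support_of_mem_edges heW, hy⟩
    · exact .inr ⟨i, by omega, hedges, hz⟩

end Clustering

theorem stmt_6_general {V : Type*} [Fintype V] [DecidableEq V] (G : SimpleGraph V)
    [DecidableRel G.Adj] (ℓ : ℕ) (u : ℕ → V)
    (H : SimpleGraph V) (hlev : level G u ℓ ≤ H)
    (htree : ∀ i < ℓ, ∀ x : V, (level G u i).Reachable (u i) x →
      H.edist (u i) x ≤ (level G u i).edist (u i) x) :
    ∀ a b : V, G.Reachable a b → H.edist a b ≤ G.edist a b + 2 := by
  intro a b hab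
  obtain ⟨W, hW⟩ := hab.exists_walk_length_eq_edist
  rw [← hW]
  rcases W.edges_subset_level_or_exists_mem_cluster ℓ with hall | ⟨i, hi, hedges, z, hzW, hz⟩
  · calc H.edist a b ≤ (level G u ℓ).edist a b := edist_anti hlev
      _ ≤ W.length := by simpa using edist_le (W.transfer _ hall)
      _ ≤ W.length + 2 := le_self_add
  · simpa using edist_le_length_add_two_of_mem_support (htree i hi)
      (edist_level_le_one_of_mem_cluster hz) (W.transfer _ hedges) (by simpa using hzW)

/-- Let `u 0, …, u (ℓ-1)` be a `t`-clustering of a finite graph `G`, and let `H` be a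
spanning subgraph of `G` that contains every edge of `G_ℓ` and satisfies, for every
index `i < ℓ` and every vertex `x` reachable from `u i` in `G_{i-1}` (which, in our
0-indexed notation, is `level G u i`), `d_H(u i, x) ≤ d_{G_{i-1}}(u i, x)`.
Then `H` is an additive `2`-spanner of `G`. -/
theorem stmt_6 {V : Type*} [Fintype V] [DecidableEq V] (G : SimpleGraph V)
    [DecidableRel G.Adj] (t ℓ : ℕ) (u : ℕ → V) (h : IsClustering G t ℓ u)
    (H : SimpleGraph V) (hHG : H ≤ G) (hlev : level G u ℓ ≤ H)
    (htree : ∀ i < ℓ, ∀ x : V, (level G u i).Reachable (u i) x →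
      H.edist (u i) x ≤ (level G u i).edist (u i) x) :
    ∀ a b : V, G.Reachable a b → H.edist a b ≤ G.edist a b + 2 :=
  stmt_6_general G ℓ u H hlev htree
end

section
/- Let u_1,…,u_ℓ be a t-clustering of a finite simple unweighted undirected graph G on n vertices, with t = n^{1/3} (so that ℓ ≤ n^{2/3}). Then the spanning subgraph H of G whose edge set consists of all edges of G_ℓ together with all edges of G between each u_i and the vertices of C_i \ {u_i} has at most n^{4/3} + n edges. -/
open SimpleGraph

/-- The set of edges of `G` joining each cluster center `u i` (for `i < ℓ`) to the
other vertices of its cluster `C_i \ {u i}`. -/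
def clusterEdges {V : Type*} [Fintype V] [DecidableEq V] (G : SimpleGraph V)
    [DecidableRel G.Adj] (u : ℕ → V) (ℓ : ℕ) : Set (Sym2 V) :=
  {e | ∃ i < ℓ, ∃ x ∈ cluster G u i, x ≠ u i ∧ e = s(u i, x)}

/-
Every edge of `G_ℓ` has an endpoint `w` outside `C_1 ∪ … ∪ C_ℓ`, and by (iii) the closed neighbourhood of `w`
meets fewer than `t` vertices outside it, so `G_ℓ` has fewer than `n t` edges. The edges joining the centres
to their clusters number at most `∑ |C_i| ≤ n`, the clusters being disjoint. Finally `n t = n^{4/3}`.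
-/

section

variable {V : Type*} [Fintype V] [DecidableEq V] (G : SimpleGraph V) [DecidableRel G.Adj] (u : ℕ → V)

lemma clustered_mono : Monotone (clustered G u) :=
  monotone_nat_of_le_succ fun _ => Finset.subset_union_left

lemma cluster_subset_clustered_succ (i : ℕ) : cluster G u i ⊆ clustered G u (i + 1) :=
  Finset.sdiff_subset.trans Finset.subset_union_right

lemma pairwise_disjoint_cluster : Pairwise (Function.onFun Disjoint (cluster G u)) :=
  (pairwise_disjoint_on _).2 fun _ _ hij =>
    Finset.disjoint_sdiff.mono_left
      ((cluster_subset_clustered_succ G u _).trans (clustered_mono G u hij))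

lemma sum_card_cluster_le (ℓ : ℕ) : ∑ i ∈ Finset.range ℓ, (cluster G u i).card ≤ Fintype.card V := by
  rw [← Finset.card_biUnion ((pairwise_disjoint_cluster G u).set_pairwise _)]
  exact Finset.card_le_univ _

lemma clusterEdges_subset (ℓ : ℕ) :
    clusterEdges G u ℓ ⊆ ↑((Finset.range ℓ).biUnion fun i => (cluster G u i).image (s(u i, ·))) := by
  rintro _ ⟨i, hi, x, hx, -, rfl⟩
  simp only [Finset.coe_biUnion, Finset.coe_range, Set.mem_iUnion, Finset.coe_image]
  exact ⟨i, hi, x, hx, rfl⟩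

lemma ncard_clusterEdges_le (ℓ : ℕ) : (clusterEdges G u ℓ).ncard ≤ Fintype.card V :=
  calc (clusterEdges G u ℓ).ncard
      ≤ ((Finset.range ℓ).biUnion fun i => (cluster G u i).image (s(u i, ·))).card := by
        rw [← Set.ncard_coe_finset]; exact Set.ncard_le_ncard (clusterEdges_subset G u ℓ)
    _ ≤ ∑ i ∈ Finset.range ℓ, (cluster G u i).card :=
        Finset.card_biUnion_le.trans (Finset.sum_le_sum fun _ _ => Finset.card_image_le)
    _ ≤ Fintype.card V := sum_card_cluster_le G u ℓ

lemma edgeSet_level_subset (ℓ : ℕ) :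
    (level G u ℓ).edgeSet ⊆
      ↑(Finset.univ.biUnion fun w => (closedNbhd G w \ clustered G u ℓ).image (s(w, ·))) := by
  intro e he
  induction e using Sym2.ind with
  | _ a b =>
    obtain ⟨hadj, hnot⟩ := he
    simp only [Finset.coe_biUnion, Finset.coe_univ, Set.mem_univ, Set.iUnion_true,
      Set.mem_iUnion, Finset.coe_image, Set.mem_image, Finset.mem_coe, Finset.mem_sdiff]
    by_cases hb : b ∈ clustered G u ℓ
    · exact ⟨b, a, ⟨by simp [closedNbhd, hadj.symm], fun ha => hnot ⟨ha, hb⟩⟩, Sym2.eq_swap⟩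
    · exact ⟨a, b, ⟨by simp [closedNbhd, hadj], hb⟩, rfl⟩

lemma ncard_edgeSet_level_le (ℓ : ℕ) :
    (level G u ℓ).edgeSet.ncard ≤ ∑ w, (closedNbhd G w \ clustered G u ℓ).card :=
  calc (level G u ℓ).edgeSet.ncard
      ≤ (Finset.univ.biUnion fun w => (closedNbhd G w \ clustered G u ℓ).image (s(w, ·))).card := by
        rw [← Set.ncard_coe_finset]; exact Set.ncard_le_ncard (edgeSet_level_subset G u ℓ)
    _ ≤ ∑ w, (closedNbhd G w \ clustered G u ℓ).card :=
        Finset.card_biUnion_le.trans (Finset.sum_le_sum fun _ _ => Finset.card_image_le)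

lemma ncard_edgeSet_fromEdgeSet_level_union_le {t ℓ : ℕ}
    (hsmall : ∀ v, (closedNbhd G v \ clustered G u ℓ).card < t) :
    (fromEdgeSet ((level G u ℓ).edgeSet ∪ clusterEdges G u ℓ)).edgeSet.ncard ≤
      Fintype.card V * t + Fintype.card V := by
  have hlevel : (level G u ℓ).edgeSet.ncard ≤ Fintype.card V * t :=
    calc (level G u ℓ).edgeSet.ncard ≤ ∑ w, (closedNbhd G w \ clustered G u ℓ).card :=
          ncard_edgeSet_level_le G u ℓ
      _ ≤ ∑ _w : V, t := Finset.sum_le_sum fun w _ => (hsmall w).le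
      _ = Fintype.card V * t := by simp
  calc (fromEdgeSet ((level G u ℓ).edgeSet ∪ clusterEdges G u ℓ)).edgeSet.ncard
      ≤ ((level G u ℓ).edgeSet ∪ clusterEdges G u ℓ).ncard := by
        rw [edgeSet_fromEdgeSet]; exact Set.ncard_le_ncard Set.sdiff_subset
    _ ≤ (level G u ℓ).edgeSet.ncard + (clusterEdges G u ℓ).ncard := Set.ncard_union_le _ _
    _ ≤ Fintype.card V * t + Fintype.card V := add_le_add hlevel (ncard_clusterEdges_le G u ℓ)

lemma mul_rpow_one_third (x : ℝ) (hx : 0 ≤ x) : x * x ^ ((1 : ℝ) / 3) = x ^ ((4 : ℝ) / 3) := by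
  rw [← Real.rpow_one_add' hx (by norm_num)]; norm_num

end

/-- Let `u 0, …, u (ℓ-1)` be a `t`-clustering of a finite graph `G` on `n` vertices
with `t = n^(1/3)`.  Then the spanning subgraph of `G` whose edge set consists of all
edges of `G_ℓ` together with all edges of `G` between each `u i` and the vertices of
`C_i \ {u i}` has at most `n^(4/3) + n` edges. -/
theorem stmt_12 {V : Type*} [Fintype V] [DecidableEq V] (G : SimpleGraph V)
    [DecidableRel G.Adj] (t ℓ : ℕ) (u : ℕ → V) (h : IsClustering G t ℓ u)
    (ht : (t : ℝ) = (Fintype.card V : ℝ) ^ ((1 : ℝ) / 3)) :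
    ((SimpleGraph.fromEdgeSet
        ((level G u ℓ).edgeSet ∪ clusterEdges G u ℓ)).edgeSet.ncard : ℝ)
      ≤ (Fintype.card V : ℝ) ^ ((4 : ℝ) / 3) + (Fintype.card V : ℝ) := by
  rw [← mul_rpow_one_third _ (Nat.cast_nonneg _), ← ht]
  exact_mod_cast ncard_edgeSet_fromEdgeSet_level_union_le G u h.2.2
end
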